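/- Multiplication by z maps P_{r,c} continuously into P_{r',c'} whenever r < r' and c ≤ c', provided ln x = o(ω(x)): that is, there is a constant C with ‖z·φ‖_{r',c'} ≤ C‖φ‖_{r,c} for all φ ∈ P_{r,c}. Consequently the inductive limit 𝒫_a is a module over the polynomial ring ℂ[z]. -/

import Mathlib

/-!
Since `log x ≤ ε ω(x)` for large `x`, with `ε = r' - r`, and `ω ≥ 0`, we get
`x ≤ C e^{ε ω(x)}` for all `x`. Hence
`|z| e^{-r' ω(|z|) - c' |Im z|} ≤ C e^{-r ω(|z|) - c |Im z|}` pointwise, and multiplying by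
`|φ z|` and taking suprema gives the bound.
-/

open Filter

theorem exists_le_mul_exp_of_isLittleO_log {ω : ℝ → ℝ} (hω0 : ∀ x, 0 ≤ ω x)
    (hlog : (fun x => Real.log x) =o[atTop] ω) {ε : ℝ} (hε : 0 < ε) :
    ∃ C > 0, ∀ x, x ≤ C * Real.exp (ε * ω x) := by
  obtain ⟨X, hX⟩ := eventually_atTop.mp (hlog.def hε)
  refine ⟨max X 1, by positivity, fun x => ?_⟩
  have hexp_ge_one : 1 ≤ Real.exp (ε * ω x) := Real.one_le_exp (mul_nonneg hε.le (hω0 x))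
  rcases le_or_gt x (max X 1) with hxC | hxC
  · exact hxC.trans (le_mul_of_one_le_right (by positivity) hexp_ge_one)
  · have hlogx : Real.log x ≤ ε * ω x := by
      have h := hX x ((le_max_left _ _).trans hxC.le)
      rw [Real.norm_eq_abs, Real.norm_eq_abs, abs_of_nonneg (hω0 x)] at h
      exact (le_abs_self _).trans h
    have hx_pos : 0 < x := (zero_lt_one.trans_le (le_max_right _ _)).trans hxC
    calc x = Real.exp (Real.log x) := (Real.exp_log hx_pos).symm
      _ ≤ Real.exp (ε * ω x) := Real.exp_le_exp.mpr hlogx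
      _ ≤ max X 1 * Real.exp (ε * ω x) :=
          le_mul_of_one_le_left (Real.exp_nonneg _) (le_max_right _ _)

theorem mul_exp_le_mul_exp_of_le_mul_exp {ω : ℝ → ℝ} {C r r' c c' : ℝ} (hC0 : 0 ≤ C)
    (hC : ∀ x, x ≤ C * Real.exp ((r' - r) * ω x)) (hc : c ≤ c') (x : ℝ) {y : ℝ} (hy : 0 ≤ y) :
    x * Real.exp (-(r' * ω x) - c' * y) ≤ C * Real.exp (-(r * ω x) - c * y) := by
  have hexponent : (r' - r) * ω x + (-(r' * ω x) - c' * y) ≤ -(r * ω x) - c * y := by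
    nlinarith [mul_le_mul_of_nonneg_right hc hy]
  calc x * Real.exp (-(r' * ω x) - c' * y)
      ≤ C * Real.exp ((r' - r) * ω x) * Real.exp (-(r' * ω x) - c' * y) :=
        mul_le_mul_of_nonneg_right (hC x) (Real.exp_nonneg _)
    _ = C * Real.exp ((r' - r) * ω x + (-(r' * ω x) - c' * y)) := by
        rw [mul_assoc, ← Real.exp_add]
    _ ≤ C * Real.exp (-(r * ω x) - c * y) := by gcongr

theorem bddAbove_and_iSup_le_mul_of_le_mul {ι : Type*} [Nonempty ι] {f g : ι → ℝ} {C : ℝ}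
    (hC : 0 ≤ C) (hfg : ∀ i, f i ≤ C * g i) (hg : BddAbove (Set.range g)) :
    BddAbove (Set.range f) ∧ ⨆ i, f i ≤ C * ⨆ i, g i := by
  obtain ⟨M, hM⟩ := hg
  refine ⟨⟨C * M, ?_⟩, ciSup_le fun i => ?_⟩
  · rintro _ ⟨i, rfl⟩
    exact (hfg i).trans (mul_le_mul_of_nonneg_left (hM ⟨i, rfl⟩) hC)
  · exact (hfg i).trans (mul_le_mul_of_nonneg_left (le_ciSup ⟨M, hM⟩ i) hC)

theorem stmt9_general (ω : ℝ → ℝ)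
    (hω0 : ∀ x, 0 ≤ ω x) (hlog : (fun x => Real.log x) =o[atTop] ω)
    (r r' c c' : ℝ) (hr : r < r') (hc : c ≤ c') :
    ∃ C > 0, ∀ φ : ℂ → ℂ,
      BddAbove (Set.range fun z : ℂ => ‖φ z‖ * Real.exp (-(r * ω ‖z‖) - c * |z.im|)) →
      BddAbove (Set.range fun z : ℂ =>
          ‖z * φ z‖ * Real.exp (-(r' * ω ‖z‖) - c' * |z.im|)) ∧
        (⨆ z : ℂ, ‖z * φ z‖ * Real.exp (-(r' * ω ‖z‖) - c' * |z.im|)) ≤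
          C * ⨆ z : ℂ, ‖φ z‖ * Real.exp (-(r * ω ‖z‖) - c * |z.im|) := by
  obtain ⟨C, hC0, hC⟩ := exists_le_mul_exp_of_isLittleO_log hω0 hlog (sub_pos.mpr hr)
  refine ⟨C, hC0, fun φ hφ => bddAbove_and_iSup_le_mul_of_le_mul hC0.le (fun z => ?_) hφ⟩
  calc ‖z * φ z‖ * Real.exp (-(r' * ω ‖z‖) - c' * |z.im|)
      = ‖φ z‖ * (‖z‖ * Real.exp (-(r' * ω ‖z‖) - c' * |z.im|)) := by rw [norm_mul]; ring
    _ ≤ ‖φ z‖ * (C * Real.exp (-(r * ω ‖z‖) - c * |z.im|)) :=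
        mul_le_mul_of_nonneg_left
          (mul_exp_le_mul_exp_of_le_mul_exp hC0.le hC hc ‖z‖ (abs_nonneg z.im)) (norm_nonneg _)
    _ = C * (‖φ z‖ * Real.exp (-(r * ω ‖z‖) - c * |z.im|)) := by ring

/-- If `ln x = o(ω(x))`, `r < r'` and `c ≤ c'`, then multiplication by `z` maps `P_{r,c}`
continuously into `P_{r',c'}`: there is `C > 0` with `‖z·φ‖_{r',c'} ≤ C‖φ‖_{r,c}`. -/
theorem stmt9 (ω : ℝ → ℝ) (hmono : Monotone ω) (hcont : Continuous ω)
    (hω0 : ∀ x, 0 ≤ ω x) (hlog : (fun x => Real.log x) =o[atTop] ω)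
    (r r' c c' : ℝ) (hr : r < r') (hc : c ≤ c') (hr0 : 0 < r) (hc0 : 0 < c) :
    ∃ C > 0, ∀ φ : ℂ → ℂ,
      BddAbove (Set.range fun z : ℂ => ‖φ z‖ * Real.exp (-(r * ω ‖z‖) - c * |z.im|)) →
      BddAbove (Set.range fun z : ℂ =>
          ‖z * φ z‖ * Real.exp (-(r' * ω ‖z‖) - c' * |z.im|)) ∧
        (⨆ z : ℂ, ‖z * φ z‖ * Real.exp (-(r' * ω ‖z‖) - c' * |z.im|)) ≤
          C * ⨆ z : ℂ, ‖φ z‖ * Real.exp (-(r * ω ‖z‖) - c * |z.im|) :=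
  stmt9_general ω hω0 hlog r r' c c' hr hc
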